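/- arXiv:1202.5523 — 4 statements merged into one kernel-verified Lean document; each statement's English description precedes it below -/
import Mathlib

section
/- Let G be a finite quiver and let w be a walk on G. Then there exist no nontrivial walks a, b on G with w = a ⊙ b (i.e., w is irreducible for the nesting product) if and only if w is a simple path or a simple cycle of G. -/
/-- A walk on the quiver with vertex set `V` and edge relation `E`:
a nonempty list of vertices in which consecutive vertices are joined by edges. -/
structure QWalk (V : Type) (E : V → V → Prop) : Type where
  verts : List V
  ne : verts ≠ []
  chain : verts.Chain' E

namespace QWalk

variable {V : Type} {E : V → V → Prop}

/-- The initial vertex of a walk. -/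
def first (w : QWalk V E) : V := w.verts.head w.ne

/-- The final vertex of a walk. -/
def last (w : QWalk V E) : V := w.verts.getLast w.ne

/-- The length of a walk (its number of edges). -/
def len (w : QWalk V E) : ℕ := w.verts.length - 1

/-- A walk is trivial when it has length `0`. -/
def Trivial (w : QWalk V E) : Prop := w.len = 0

/-- A walk is a cycle when its initial and final vertices coincide. -/
def IsCycle (w : QWalk V E) : Prop := w.first = w.last

/-- A cycle off the vertex `β`. -/
def IsCycleOff (w : QWalk V E) (β : V) : Prop := w.IsCycle ∧ w.first = β

/-- A simple path: all vertices distinct (trivial walks included). -/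
def IsSimplePath (w : QWalk V E) : Prop := w.verts.Nodup

/-- A simple cycle: a cycle whose internal vertices are pairwise distinct and
different from the base vertex (trivial walks included). -/
def IsSimpleCycle (w : QWalk V E) : Prop := w.IsCycle ∧ w.verts.tail.Nodup

/-- `IsNest a b w` holds precisely when `(a, b)` is a canonical couple (so the nesting
product `a ⊙ b` is defined) and `w = a ⊙ b`: here `b` is a cycle off `β`, the vertex
sequence of `a` decomposes at the *last* occurrence of `β` as `A₁ ++ [β] ++ A₂`,
the couple is canonical (either `a` is also a cycle off `β`, or no vertex other than
`β` visited by `a` strictly before the last occurrence of `β` is visited by `b`),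
and `w` is obtained by replacing that last occurrence of `β` by the whole
vertex sequence of `b`. -/
def IsNest (a b w : QWalk V E) : Prop :=
  ∃ (β : V) (A₁ A₂ : List V),
    b.first = β ∧ b.last = β ∧
    a.verts = A₁ ++ β :: A₂ ∧ β ∉ A₂ ∧
    (a.IsCycleOff β ∨ ∀ v ∈ A₁, v ≠ β → v ∉ b.verts) ∧
    w.verts = A₁ ++ b.verts ++ A₂

/-- Nesting extended by the convention that nesting with a trivial walk acts as the
identity: `(μ) ⊙ w = w ⊙ (μ) = w` for any walk `w` visiting `μ`. -/
def IsNestE (a b w : QWalk V E) : Prop :=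
  IsNest a b w ∨ (a.Trivial ∧ a.first ∈ b.verts ∧ w = b)

end QWalk

/-!
A decomposition `w = a ⊙ b` with `b` nontrivial makes the closed walk `b` of positive length a
contiguous piece of `w`, which a simple path cannot contain; nor can a simple cycle, except as
a piece starting at its base point, and then `a` would be trivial since `β` does not recur
after `b`. Conversely, if `w` repeats a vertex, cut out the cycle `b` from the repeated vertex
`β` whose first occurrence comes first up to the last occurrence of `β`: the vertices before
`β` occur only once in `w`, so the couple is canonical. This leaves `a` trivial only when `w`
is itself a cycle `β ⋯ β`; as `w` is not a simple cycle, either `β` recurs inside and `w` is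
the product of two cycles off `β`, or the interior repeats a vertex and the same cut, made
there, is canonical because `β` does not occur inside.
-/

namespace List

variable {α : Type*}

theorem exists_eq_append_cons_notMem_right {a : α} :
    ∀ {l : List α}, a ∈ l → ∃ s t, l = s ++ a :: t ∧ a ∉ t
  | [], h => absurd h not_mem_nil
  | x :: l, h => by
    by_cases ha : a ∈ l
    · obtain ⟨s, t, rfl, hat⟩ := exists_eq_append_cons_notMem_right ha
      exact ⟨x :: s, t, rfl, hat⟩
    · obtain rfl : a = x := (mem_cons.1 h).resolve_right ha
      exact ⟨[], l, rfl, ha⟩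

theorem exists_eq_append_repeat_of_not_nodup :
    ∀ {l : List α}, ¬ l.Nodup →
      ∃ A₁ β M A₂, l = A₁ ++ β :: M ++ β :: A₂ ∧ β ∉ A₂ ∧ A₁.Disjoint (β :: M)
  | [], h => absurd nodup_nil h
  | x :: l, h => by
    by_cases hx : x ∈ l
    · obtain ⟨M, A₂, rfl, hA₂⟩ := exists_eq_append_cons_notMem_right hx
      exact ⟨[], x, M, A₂, rfl, hA₂, disjoint_nil_left _⟩
    · obtain ⟨A₁, β, M, A₂, rfl, hA₂, hdisj⟩ :=
        exists_eq_append_repeat_of_not_nodup fun hl => h (nodup_cons.2 ⟨hx, hl⟩)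
      refine ⟨x :: A₁, β, M, A₂, rfl, hA₂, ?_⟩
      exact disjoint_cons_left.2 ⟨fun hxM => hx (by simp_all), hdisj⟩

end List

namespace QWalk

variable {V : Type} {E : V → V → Prop} {a b w : QWalk V E}

theorem first_eq_of_verts_eq_cons {x : V} {l : List V}
    (h : w.verts = x :: l) : w.first = x := by
  simp [first, h]

theorem last_mem_of_verts_eq_append {l₁ l₂ : List V}
    (h : w.verts = l₁ ++ l₂) (hl₂ : l₂ ≠ []) : w.last ∈ l₂ := by
  revert h
  rcases w with ⟨verts, hne, -⟩
  rintro rfl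
  rw [last, List.getLast_append_of_ne_nil hne hl₂]
  exact List.getLast_mem hl₂

theorem last_eq_of_verts_eq_append_singleton {x : V} {l : List V}
    (h : w.verts = l ++ [x]) : w.last = x :=
  List.mem_singleton.1 (last_mem_of_verts_eq_append h (List.cons_ne_nil x []))

theorem trivial_iff_length_le_one : w.Trivial ↔ w.verts.length ≤ 1 := by
  simp only [Trivial, len]
  omega

theorem exists_verts_eq_first_cons (h : ¬ w.Trivial) :
    ∃ l, w.verts = w.first :: l ∧ w.last ∈ l := by
  obtain ⟨x, l, hw⟩ := List.exists_cons_of_ne_nil w.ne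
  have hl : l ≠ [] := by
    rintro rfl
    exact h (trivial_iff_length_le_one.2 (by simp [hw]))
  refine ⟨l, by rw [hw, first_eq_of_verts_eq_cons hw], ?_⟩
  exact last_mem_of_verts_eq_append (l₁ := [x]) hw hl

theorem IsCycle.not_nodup_verts (hc : w.IsCycle) (h : ¬ w.Trivial) :
    ¬ w.verts.Nodup := by
  obtain ⟨l, hw, hlast⟩ := exists_verts_eq_first_cons h
  rw [hw, List.nodup_cons, hc]
  exact fun hnd => hnd.1 hlast

theorem IsNest.not_isSimplePath (hn : IsNest a b w) (hb : ¬ b.Trivial) :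
    ¬ w.IsSimplePath := by
  obtain ⟨β, A₁, A₂, hbf, hbl, -, -, -, hw⟩ := hn
  intro hp
  refine IsCycle.not_nodup_verts (hbf.trans hbl.symm) hb (hp.sublist ?_)
  rw [hw]
  exact (List.infix_append A₁ b.verts A₂).sublist

theorem IsNest.not_isSimpleCycle (hn : IsNest a b w) (ha : ¬ a.Trivial) (hb : ¬ b.Trivial) :
    ¬ w.IsSimpleCycle := by
  obtain ⟨β, A₁, A₂, hbf, hbl, hav, hβ, -, hw⟩ := hn
  rintro ⟨hc, htail⟩
  cases A₁ with
  | cons x A₁ =>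
    refine IsCycle.not_nodup_verts (hbf.trans hbl.symm) hb (htail.sublist ?_)
    rw [hw, List.cons_append, List.cons_append, List.tail_cons]
    exact (List.infix_append A₁ b.verts A₂).sublist
  | nil =>
    have hA₂ : A₂ ≠ [] := by
      rintro rfl
      exact ha (trivial_iff_length_le_one.2 (by simp [hav]))
    obtain ⟨x, t, hbt⟩ := List.exists_cons_of_ne_nil b.ne
    have hwf : w.first = β := by
      rw [first_eq_of_verts_eq_cons (x := x) (l := t ++ A₂) (by simp [hw, hbt]), ← hbf,
        first_eq_of_verts_eq_cons hbt]
    exact hβ (hwf ▸ hc ▸ last_mem_of_verts_eq_append hw hA₂)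

theorem exists_isNest_of_verts_eq {A₁ M A₂ : List V} {β : V}
    (hw : w.verts = A₁ ++ β :: M ++ β :: A₂) (hβ : β ∉ A₂)
    (hcan : (∃ P, A₁ = β :: P) ∧ A₂ = [] ∨ ∀ v ∈ A₁, v ≠ β → v ∉ M)
    (hA : A₁ ≠ [] ∨ A₂ ≠ []) :
    ∃ a b : QWalk V E, ¬ a.Trivial ∧ ¬ b.Trivial ∧ a.IsNest b w := by
  have hc := w.chain
  rw [hw] at hc
  have hca : (A₁ ++ [β] ++ A₂).IsChain E :=
    (hc.infix ⟨[], M ++ β :: A₂, by simp⟩).append_overlap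
      (hc.infix ⟨A₁ ++ β :: M, [], by simp⟩) (List.cons_ne_nil β [])
  have hcb : (β :: M ++ [β]).IsChain E := hc.infix ⟨A₁, A₂, by simp⟩
  let a : QWalk V E := ⟨A₁ ++ [β] ++ A₂, by simp, hca⟩
  let b : QWalk V E := ⟨β :: M ++ [β], by simp, hcb⟩
  have hbl : b.last = β := last_eq_of_verts_eq_append_singleton (l := β :: M) rfl
  refine ⟨a, b, ?_, ?_, β, A₁, A₂, rfl, hbl, by simp [a], hβ, ?_, by simp [hw, b]⟩
  · rw [trivial_iff_length_le_one]
    rcases hA with h | h <;> have := List.length_pos_iff.2 h <;> simp [a] <;> omega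
  · simp [trivial_iff_length_le_one, b]
  · rcases hcan with ⟨⟨P, rfl⟩, rfl⟩ | hcan
    · have haf : a.first = β := first_eq_of_verts_eq_cons (l := P ++ [β]) (by simp [a])
      have hal : a.last = β := last_eq_of_verts_eq_append_singleton (l := β :: P) (by simp [a])
      exact Or.inl ⟨haf.trans hal.symm, haf⟩
    · refine Or.inr fun v hv hvβ hvb => hcan v hv hvβ ?_
      simpa [b, hvβ] using hvb

theorem exists_isNest_of_not_isSimplePath_of_not_isSimpleCycle (hp : ¬ w.IsSimplePath)
    (hc : ¬ w.IsSimpleCycle) :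
    ∃ a b : QWalk V E, ¬ a.Trivial ∧ ¬ b.Trivial ∧ a.IsNest b w := by
  obtain ⟨A₁, β, M, A₂, hw, hβ, hdisj⟩ := List.exists_eq_append_repeat_of_not_nodup hp
  by_cases hA : A₁ ≠ [] ∨ A₂ ≠ []
  · exact exists_isNest_of_verts_eq hw hβ
      (Or.inr fun v hv _ hvM => hdisj hv (List.mem_cons_of_mem β hvM)) hA
  obtain ⟨rfl, rfl⟩ : A₁ = [] ∧ A₂ = [] := by simpa only [not_or, not_not] using hA
  have hcyc : w.IsCycle :=
    (first_eq_of_verts_eq_cons (by simpa using hw)).trans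
      (last_eq_of_verts_eq_append_singleton (l := β :: M) (by simpa using hw)).symm
  have htail : ¬ (M ++ [β]).Nodup := fun h => hc ⟨hcyc, by simpa [hw] using h⟩
  by_cases hβM : β ∈ M
  · obtain ⟨P, Q, rfl⟩ := List.append_of_mem hβM
    exact exists_isNest_of_verts_eq (A₁ := β :: P) (M := Q) (A₂ := []) (β := β) (by simp [hw])
      List.not_mem_nil (Or.inl ⟨⟨P, rfl⟩, rfl⟩) (Or.inl (List.cons_ne_nil β P))
  · have hM : ¬ M.Nodup := fun h =>
      htail (by rw [← List.concat_eq_append, List.nodup_concat]; exact ⟨hβM, h⟩)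
    obtain ⟨B₁, γ, N, B₂, rfl, hγ, hB₁⟩ := List.exists_eq_append_repeat_of_not_nodup hM
    have hγβ : γ ≠ β := by
      rintro rfl
      simp at hβM
    refine exists_isNest_of_verts_eq (A₁ := β :: B₁) (M := N) (A₂ := B₂ ++ [β]) (β := γ)
      (by simp [hw]) (by simp [hγ, hγβ]) (Or.inr fun v hv _ hvN => ?_)
      (Or.inl (List.cons_ne_nil β B₁))
    rcases List.mem_cons.1 hv with rfl | hv
    · exact hβM (by simp [hvN])
    · exact hB₁ hv (List.mem_cons_of_mem γ hvN)

end QWalk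

theorem stmt0_general {V : Type} (E : V → V → Prop) (w : QWalk V E) :
    (¬ ∃ a b : QWalk V E, ¬ a.Trivial ∧ ¬ b.Trivial ∧ QWalk.IsNest a b w) ↔
      (w.IsSimplePath ∨ w.IsSimpleCycle) := by
  constructor
  · intro h
    by_contra hw
    rw [not_or] at hw
    exact h (QWalk.exists_isNest_of_not_isSimplePath_of_not_isSimpleCycle hw.1 hw.2)
  · rintro (hw | hw) ⟨a, b, ha, hb, hn⟩
    · exact hn.not_isSimplePath hb hw
    · exact hn.not_isSimpleCycle ha hb hw

/-- A walk `w` on a finite quiver is irreducible for the nesting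
product (there are no nontrivial walks `a`, `b` with `w = a ⊙ b`) if and only if
`w` is a simple path or a simple cycle. -/
theorem stmt0 {V : Type} [Fintype V] (E : V → V → Prop) (w : QWalk V E) :
    (¬ ∃ a b : QWalk V E, ¬ a.Trivial ∧ ¬ b.Trivial ∧ QWalk.IsNest a b w) ↔
      (w.IsSimplePath ∨ w.IsSimpleCycle) :=
  stmt0_general E w
end

section
/- Unique factorization for walks on quivers: if two canonical factorizations evaluate to the same walk w on a finite quiver G, then their multisets of nontrivial leaves coincide; in other words, the multiset of nontrivial simple-path and simple-cycle factors appearing in any factorization of w into nesting products of simple paths and simple cycles is uniquely determined by w. -/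
/-- A finite binary-tree expression whose leaves are walks. -/
inductive FTree (V : Type) (E : V → V → Prop) : Type where
  | leaf : QWalk V E → FTree V E
  | node : FTree V E → FTree V E → FTree V E

namespace FTree

variable {V : Type} {E : V → V → Prop}

/-- The multiset of leaves of a factorization tree. -/
def leaves : FTree V E → Multiset (QWalk V E)
  | .leaf w => {w}
  | .node f g => leaves f + leaves g

/-- `Evals f w`: every nesting product occurring in the evaluation of the tree `f`
is defined, and `f` evaluates to the walk `w`. -/
inductive Evals : FTree V E → QWalk V E → Prop
  | leaf (w : QWalk V E) : Evals (.leaf w) w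
  | node {f g : FTree V E} {a b w : QWalk V E} :
      Evals f a → Evals g b → QWalk.IsNest a b w → Evals (.node f g) w

end FTree

/-- A canonical factorization of a walk `w`: a finite binary-tree expression whose
leaves are simple paths or simple cycles, in which every nesting product occurring in
its evaluation is defined, and which evaluates to `w`. -/
def IsCanonFact {V : Type} {E : V → V → Prop} (f : FTree V E) (w : QWalk V E) : Prop :=
  (∀ l ∈ f.leaves, l.IsSimplePath ∨ l.IsSimpleCycle) ∧ f.Evals w

/-!
Chronological loop erasure assigns to every vertex list a multiset of loop factors: the
simple cycles erased while scanning it from the left, together with the loop-erased simple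
path that remains. A nontrivial simple path or simple cycle is its own only loop factor,
and loop factors are additive under canonical nesting: canonicity guarantees that a cycle
inserted at `β` meets the loop-erased path built before it only at `β`, so scanning it pops
exactly its own loop factors and then returns to the same state. Hence the nontrivial leaves
of any canonical factorization of `w` are the loop factors of `w`.
-/

namespace List

variable {V : Type*}

theorem exists_first_loop_of_not_nodup {l : List V} (h : ¬ l.Nodup) :
    ∃ P x M R, l = P ++ x :: (M ++ x :: R) ∧ (P ++ x :: M).Nodup := by
  induction l using reverseRecOn with
  | nil => exact absurd nodup_nil h
  | append_singleton t y ih =>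
    by_cases ht : t.Nodup
    · have hy : y ∈ t := by
        by_contra hy
        exact h (ht.append (nodup_singleton y) (by simpa using hy))
      obtain ⟨P, M, rfl⟩ := append_of_mem hy
      exact ⟨P, y, M, [], by simp, ht⟩
    · obtain ⟨P, x, M, R, rfl, hnd⟩ := ih ht
      exact ⟨P, x, M, R ++ [y], by simp, hnd⟩

theorem eq_singleton_of_nodup_of_cycle {B : List V} {β : V} (hB : B.Nodup)
    (hhead : B.head? = some β) (hlast : B.getLast? = some β) : B = [β] := by
  obtain ⟨B₀, rfl⟩ := head?_eq_some_iff.mp hhead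
  rcases eq_nil_or_concat B₀ with rfl | ⟨C, y, rfl⟩
  · rfl
  · obtain rfl : y = β := by simpa [getLast?_cons] using hlast
    exact absurd (by simp) (nodup_cons.mp hB).1

variable [DecidableEq V]

/-- Chronological loop erasure. `stack` is the loop-erased path so far, most recent vertex
first; a vertex already on the stack closes a loop, which is popped off and recorded. The
simple path left at the end is recorded if it has an edge. -/
def loopFactorsFrom (stack : List V) : List V → Multiset (List V)
  | [] => if 2 ≤ stack.length then {stack.reverse} else 0
  | x :: rest =>
    if x ∈ stack then
      {x :: (stack.takeWhile (· ≠ x)).reverse ++ [x]} +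
        loopFactorsFrom (stack.dropWhile (· ≠ x)) rest
    else loopFactorsFrom (x :: stack) rest

def loopFactors (l : List V) : Multiset (List V) := loopFactorsFrom [] l

theorem loopFactorsFrom_append_of_nodup {L : List V} (hL : L.Nodup) {stack : List V}
    (hdisj : ∀ v ∈ L, v ∉ stack) (rest : List V) :
    loopFactorsFrom stack (L ++ rest) = loopFactorsFrom (L.reverse ++ stack) rest := by
  induction L generalizing stack with
  | nil => rfl
  | cons x L ih =>
    have hx : x ∉ stack := hdisj x mem_cons_self
    rw [cons_append, loopFactorsFrom, if_neg hx, ih hL.of_cons]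
    · simp
    · intro v hv hvs
      rcases mem_cons.mp hvs with rfl | hvs
      · exact (nodup_cons.mp hL).1 hv
      · exact hdisj v (mem_cons_of_mem x hv) hvs

theorem loopFactors_of_nodup {l : List V} (h : l.Nodup) :
    l.loopFactors = if 2 ≤ l.length then {l} else 0 := by
  have := loopFactorsFrom_append_of_nodup h (stack := []) (by simp) []
  rw [append_nil] at this
  simp [loopFactors, this, loopFactorsFrom]

theorem loopFactors_singleton (a : V) : [a].loopFactors = 0 := by
  simp [loopFactors_of_nodup]

theorem loopFactors_erase_first_loop {P M : List V} {x : V} (h : (P ++ x :: M).Nodup)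
    (R : List V) :
    (P ++ x :: (M ++ x :: R)).loopFactors = {x :: (M ++ [x])} + (P ++ x :: R).loopFactors := by
  have hxM : x ∉ M := (nodup_cons.mp h.of_append_right).1
  have hPx : (P ++ [x]).Nodup := h.sublist (by simp)
  have lhs := loopFactorsFrom_append_of_nodup h (stack := []) (by simp) (x :: R)
  have rhs := loopFactorsFrom_append_of_nodup hPx (stack := []) (by simp) R
  simp only [append_assoc, cons_append, nil_append, append_nil,
    reverse_append, reverse_cons] at lhs rhs
  have hne : ∀ v ∈ M.reverse, decide (v ≠ x) = true := by
    intro v hv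
    simpa using fun e : v = x => hxM (e ▸ mem_reverse.mp hv)
  rw [loopFactors, loopFactors, lhs, rhs, loopFactorsFrom, if_pos (by simp),
    takeWhile_append_of_pos hne, dropWhile_append_of_pos hne]
  simp

theorem loopFactors_of_simple_cycle {l : List V} (hcycle : l.head? = l.getLast?)
    (htail : l.tail.Nodup) : l.loopFactors = if 2 ≤ l.length then {l} else 0 := by
  rcases l with _ | ⟨a, t⟩
  · rfl
  rcases eq_nil_or_concat t with rfl | ⟨M, b, rfl⟩
  · simp [loopFactors_singleton]
  obtain rfl : a = b := by simpa [getLast?_cons] using hcycle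
  have hnd : ([] ++ a :: M).Nodup := by
    rw [tail_cons, concat_eq_append] at htail
    exact (nodup_append_comm.mp htail : ([a] ++ M).Nodup)
  have := loopFactors_erase_first_loop hnd []
  simp_all [loopFactors_singleton]

theorem loopFactors_append_cycle_of_disjoint {A₁ B : List V} {β : V} (A₂ : List V)
    (hA₁ : A₁.Nodup) (hdisj : ∀ v ∈ A₁, v ∉ B)
    (hhead : B.head? = some β) (hlast : B.getLast? = some β) :
    (A₁ ++ B ++ A₂).loopFactors = (A₁ ++ β :: A₂).loopFactors + B.loopFactors := by
  induction hn : B.length using Nat.strong_induction_on generalizing B with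
  | _ n ih =>
    by_cases hB : B.Nodup
    · obtain rfl := eq_singleton_of_nodup_of_cycle hB hhead hlast
      simp [loopFactors_singleton]
    -- the first loop of `A₁ ++ B ++ A₂` is the first loop of `B`
    obtain ⟨P, x, M, R, rfl, hnd⟩ := exists_first_loop_of_not_nodup hB
    have hA₁P : ((A₁ ++ P) ++ x :: M).Nodup := by
      rw [append_assoc]
      exact hA₁.append hnd fun v hv hv' => hdisj v hv (by simp_all)
    have hhead' : (P ++ x :: R).head? = some β := by rw [← hhead]; cases P <;> rfl
    have hlast' : (P ++ x :: R).getLast? = some β := by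
      rw [← hlast]; simp [getLast?_append, getLast?_cons]
    have ih := ih _ (by subst hn; simp) (fun v hv hv' => hdisj v hv (by simp_all))
      hhead' hlast' rfl
    have hsplit : A₁ ++ (P ++ x :: (M ++ x :: R)) ++ A₂ =
        (A₁ ++ P) ++ x :: (M ++ x :: (R ++ A₂)) := by simp
    rw [hsplit, loopFactors_erase_first_loop hA₁P, loopFactors_erase_first_loop hnd]
    simp only [append_assoc, cons_append] at ih ⊢
    rw [ih, add_left_comm]

/-- The first alternative of `hcan` covers the canonical couples whose first factor is a
cycle off `β`. -/
theorem loopFactors_append_cycle {A₁ B : List V} {β : V} (A₂ : List V)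
    (hhead : B.head? = some β) (hlast : B.getLast? = some β)
    (hcan : A₁.head? = some β ∨ ∀ v ∈ A₁, v ≠ β → v ∉ B) :
    (A₁ ++ B ++ A₂).loopFactors = (A₁ ++ β :: A₂).loopFactors + B.loopFactors := by
  induction hn : A₁.length using Nat.strong_induction_on generalizing A₁ with
  | _ n ih =>
    by_cases hA₁ : A₁.Nodup
    · by_cases hβA₁ : β ∈ A₁
      · -- the first loop is closed by the base point of `B`
        obtain ⟨P, S, rfl⟩ := append_of_mem hβA₁
        obtain ⟨B₀, rfl⟩ := head?_eq_some_iff.mp hhead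
        have hP : P.head? = some β ∨ ∀ v ∈ P, v ≠ β → v ∉ β :: B₀ := by
          rcases hcan with h | h
          · cases P with
            | nil => simp
            | cons p P => exact .inl (by simpa using h)
          · exact .inr fun v hv => h v (by simp [hv])
        have ih := ih _ (by subst hn; simp) hP rfl
        simp only [append_assoc, cons_append] at ih ⊢
        rw [loopFactors_erase_first_loop hA₁, loopFactors_erase_first_loop hA₁, ih, add_assoc]
      · refine loopFactors_append_cycle_of_disjoint A₂ hA₁ ?_ hhead hlast
        rcases hcan with h | h
        · exact absurd (mem_of_mem_head? h) hβA₁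
        · exact fun v hv => h v hv (ne_of_mem_of_not_mem hv hβA₁)
    · -- the first loop lies inside `A₁`
      obtain ⟨P, x, M, R, rfl, hnd⟩ := exists_first_loop_of_not_nodup hA₁
      have hcan' :
          (P ++ x :: R).head? = some β ∨ ∀ v ∈ P ++ x :: R, v ≠ β → v ∉ B := by
        rcases hcan with h | h
        · exact .inl (by rw [← h]; cases P <;> rfl)
        · exact .inr fun v hv => h v (by simp at hv ⊢; tauto)
      have ih := ih _ (by subst hn; simp) hcan' rfl
      simp only [append_assoc, cons_append] at ih ⊢
      rw [loopFactors_erase_first_loop hnd, loopFactors_erase_first_loop hnd, ih, add_assoc]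

end List

namespace QWalk

variable {V : Type} {E : V → V → Prop}

theorem verts_injective : Function.Injective (verts : QWalk V E → List V) := by
  rintro ⟨_, _, _⟩ ⟨_, _, _⟩ rfl
  rfl

theorem head?_verts (w : QWalk V E) : w.verts.head? = some w.first :=
  List.head?_eq_some_head w.ne

theorem getLast?_verts (w : QWalk V E) : w.verts.getLast? = some w.last :=
  List.getLast?_eq_some_getLast w.ne

theorem trivial_iff_length_lt_two (w : QWalk V E) : w.Trivial ↔ w.verts.length < 2 := by
  have := List.length_pos_of_ne_nil w.ne
  rw [Trivial, len]
  omega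

variable [DecidableEq V]

open scoped Classical in
theorem loopFactors_verts_of_simple {l : QWalk V E} (h : l.IsSimplePath ∨ l.IsSimpleCycle) :
    l.verts.loopFactors = if l.Trivial then 0 else {l.verts} := by
  have hfactors : l.verts.loopFactors = if 2 ≤ l.verts.length then {l.verts} else 0 := by
    rcases h with h | ⟨hcycle, htail⟩
    · exact List.loopFactors_of_nodup h
    · refine List.loopFactors_of_simple_cycle ?_ htail
      rw [head?_verts, getLast?_verts, hcycle]
  rw [hfactors, trivial_iff_length_lt_two]
  split_ifs <;> first | rfl | omega

theorem IsNest.loopFactors_verts {a b w : QWalk V E} (h : IsNest a b w) :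
    w.verts.loopFactors = a.verts.loopFactors + b.verts.loopFactors := by
  obtain ⟨β, A₁, A₂, hfirst, hlast, ha, -, hcan, hw⟩ := h
  have hcan' : A₁.head? = some β ∨ ∀ v ∈ A₁, v ≠ β → v ∉ b.verts := by
    rcases hcan with ⟨-, hβ⟩ | hcan
    · rcases A₁ with _ | ⟨x, A₁⟩
      · simp
      · have := a.head?_verts
        simp_all
    · exact .inr hcan
  rw [hw, ha]
  exact List.loopFactors_append_cycle A₂ (hfirst ▸ b.head?_verts) (hlast ▸ b.getLast?_verts)
    hcan'

end QWalk

open scoped Classical in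
theorem IsCanonFact.map_verts_filter_leaves {V : Type} {E : V → V → Prop} [DecidableEq V]
    {f : FTree V E} {w : QWalk V E} (h : IsCanonFact f w) :
    (f.leaves.filter (fun l => ¬ l.Trivial)).map QWalk.verts = w.verts.loopFactors := by
  obtain ⟨hsimple, heval⟩ := h
  induction heval with
  | leaf u =>
    rw [QWalk.loopFactors_verts_of_simple (hsimple u (by simp [FTree.leaves]))]
    by_cases hu : u.Trivial <;> simp [FTree.leaves, Multiset.filter_singleton, hu]
  | node _ _ hnest ihf ihg =>
    simp only [FTree.leaves, Multiset.mem_add] at hsimple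
    rw [FTree.leaves, Multiset.filter_add, Multiset.map_add, hnest.loopFactors_verts,
      ihf fun l hl => hsimple l (.inl hl), ihg fun l hl => hsimple l (.inr hl)]

open scoped Classical in
theorem stmt3_general {V : Type} (E : V → V → Prop) (w : QWalk V E)
    (f g : FTree V E) (hf : IsCanonFact f w) (hg : IsCanonFact g w) :
    f.leaves.filter (fun l => ¬ l.Trivial) = g.leaves.filter (fun l => ¬ l.Trivial) :=
  Multiset.map_injective QWalk.verts_injective
    (hf.map_verts_filter_leaves.trans hg.map_verts_filter_leaves.symm)

open scoped Classical in
/-- Unique factorization for walks on finite quivers: any two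
canonical factorizations of the same walk `w` have the same multiset of nontrivial
leaves. -/
theorem stmt3 {V : Type} [Fintype V] (E : V → V → Prop) (w : QWalk V E)
    (f g : FTree V E) (hf : IsCanonFact f w) (hg : IsCanonFact g w) :
    f.leaves.filter (fun l => ¬ l.Trivial) = g.leaves.filter (fun l => ¬ l.Trivial) :=
  stmt3_general E w f g hf hg
end

section
/- Let G be a finite quiver and let w be a walk on G that is neither a simple path nor a simple cycle, and which is either open or a cycle whose base vertex does not occur as an internal vertex. Let η be the earliest repeated vertex of w (the vertex occurring at least twice in w whose first occurrence is earliest, where for a cycle only the occurrences at positions 1, …, n of its vertex sequence are considered). Let s be the portion of w joining the first occurrence of η to the last occurrence of η, and let w′ be the walk obtained from w by replacing s with the single vertex η. Then s is a nontrivial cycle off η, w′ is a nontrivial walk, 1 ≤ ℓ(w′) < ℓ(w) and 1 ≤ ℓ(s) < ℓ(w), the couple (w′, s) is canonical, and w = w′ ⊙ s. -/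
/-!
Since `η ∉ P ++ S`, every occurrence of `η` lies in `M`, and there are at least two, so `M` is a
nontrivial cycle off `η`; contracting it to `η` keeps consecutive vertices adjacent. `P ++ S` is
nonempty, for otherwise `w` would be a cycle off `η` with `η` internal. Canonicity: a vertex of
`P` met again in `M` would be a repeated vertex occurring before `η`, unless it is the base vertex
of a cycle (which the counted sequence omits); but then it would be an internal vertex of `w`.
-/

namespace List

variable {α : Type*}

theorem IsChain.contract {R : α → α → Prop} {P M S : List α} {a : α}
    (h : IsChain R (P ++ M ++ S)) (hh : M.head? = some a) (hl : M.getLast? = some a) :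
    IsChain R (P ++ a :: S) := by
  obtain ⟨M₁, rfl⟩ := head?_eq_some_iff.mp hh
  obtain ⟨M₀, hM₀⟩ := getLast?_eq_some_iff.mp hl
  rw [isChain_split]
  exact ⟨h.prefix ⟨M₁ ++ S, by simp⟩, h.suffix ⟨P ++ M₀, by simp [hM₀]⟩⟩

variable [DecidableEq α]

theorem mem_dropLast_of_two_le_count {l : List α} {a : α} (h : 2 ≤ l.count a) :
    a ∈ l.dropLast := by
  have hne : l ≠ [] := by rintro rfl; simp at h
  have hsplit := count_append (a := a) (l₁ := l.dropLast) (l₂ := [l.getLast hne])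
  rw [dropLast_append_getLast hne] at hsplit
  have hlast : [l.getLast hne].count a ≤ 1 := count_le_length
  exact count_pos_iff.mp (by omega)

theorem disjoint_of_repeats_after {Q M S : List α} {a : α} (ha : a ∉ Q)
    (h : ∀ v, 2 ≤ (Q ++ M ++ S).count v → (Q ++ M ++ S).idxOf a ≤ (Q ++ M ++ S).idxOf v) :
    Q.Disjoint M := by
  intro v hvQ hvM
  have hrep : 2 ≤ (Q ++ M ++ S).count v := by
    have := count_pos_iff.mpr hvQ
    have := count_pos_iff.mpr hvM
    simp only [count_append]
    omega
  have hv : (Q ++ M ++ S).idxOf v < Q.length := by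
    rw [append_assoc, idxOf_append_of_mem hvQ]
    exact idxOf_lt_length_iff.mpr hvQ
  have ha : Q.length ≤ (Q ++ M ++ S).idxOf a := by
    rw [append_assoc, idxOf_append_of_notMem ha]
    omega
  have := h v hrep
  omega

end List

namespace QWalk

variable {V : Type} {E : V → V → Prop}

theorem first_eq_of_head? {w : QWalk V E} {a : V} (h : w.verts.head? = some a) :
    w.first = a :=
  (List.head_eq_iff_head?_eq_some w.ne).mpr h

theorem last_eq_of_getLast? {w : QWalk V E} {a : V} (h : w.verts.getLast? = some a) :
    w.last = a :=
  (List.getLast_eq_iff_getLast?_eq_some w.ne).mpr h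

variable {w : QWalk V E} {K P M S : List V} {η : V}

theorem sublist_verts (hK : (¬ w.IsCycle ∧ K = w.verts) ∨ (w.IsCycle ∧ K = w.verts.tail)) :
    K.Sublist w.verts := by
  rcases hK with ⟨-, rfl⟩ | ⟨-, rfl⟩
  exacts [List.Sublist.refl _, List.tail_sublist _]

variable [DecidableEq V]

theorem append_ne_nil_of_split
    (hshape : ¬ w.IsCycle ∨ w.first ∉ w.verts.tail.dropLast)
    (hK : (¬ w.IsCycle ∧ K = w.verts) ∨ (w.IsCycle ∧ K = w.verts.tail))
    (hrep : 2 ≤ K.count η) (hsplit : w.verts = P ++ M ++ S)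
    (hMh : M.head? = some η) (hMl : M.getLast? = some η) :
    P ++ S ≠ [] := by
  intro hPS
  obtain ⟨rfl, rfl⟩ := List.append_eq_nil_iff.mp hPS
  simp only [List.nil_append, List.append_nil] at hsplit
  have hfirst : w.first = η := first_eq_of_head? (hsplit ▸ hMh)
  have hcyc : w.IsCycle := hfirst.trans (last_eq_of_getLast? (hsplit ▸ hMl)).symm
  rcases hK with ⟨hopen, -⟩ | ⟨-, rfl⟩
  · exact hopen hcyc
  · have hbase := hshape.resolve_left (not_not_intro hcyc)
    rw [hfirst] at hbase
    exact hbase (List.mem_dropLast_of_two_le_count hrep)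

theorem canonical_of_split
    (hshape : ¬ w.IsCycle ∨ w.first ∉ w.verts.tail.dropLast)
    (hK : (¬ w.IsCycle ∧ K = w.verts) ∨ (w.IsCycle ∧ K = w.verts.tail))
    (hearliest : ∀ v : V, 2 ≤ K.count v → K.idxOf η ≤ K.idxOf v)
    (hsplit : w.verts = P ++ M ++ S) (hP : η ∉ P) (hMl : M.getLast? = some η) :
    ∀ v ∈ P, v ≠ η → v ∉ M := by
  intro v hvP hvη hvM
  rcases hK with ⟨-, rfl⟩ | ⟨hcyc, rfl⟩
  · rw [hsplit] at hearliest
    exact List.disjoint_of_repeats_after hP hearliest hvP hvM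
  obtain ⟨a, P', rfl⟩ := List.exists_cons_of_ne_nil (List.ne_nil_of_mem hvP)
  have htail : w.verts.tail = P' ++ M ++ S := by simp [hsplit]
  rcases List.mem_cons.mp hvP with rfl | hvP'
  · obtain ⟨M₀, rfl⟩ := List.getLast?_eq_some_iff.mp hMl
    have hfirst : w.first = v := first_eq_of_head? (by simp [hsplit])
    have hvM₀ : v ∈ M₀ := by simpa [hvη] using hvM
    apply hshape.resolve_left (not_not_intro hcyc)
    rw [hfirst, htail, List.append_assoc, List.append_assoc, List.singleton_append,
      ← List.append_assoc, List.dropLast_append_cons]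
    simp [hvM₀]
  · rw [htail] at hearliest
    exact List.disjoint_of_repeats_after (fun h => hP (.tail _ h)) hearliest hvP' hvM

end QWalk

theorem stmt5_general {V : Type} [DecidableEq V] (E : V → V → Prop)
    (w : QWalk V E)
    (hshape : ¬ w.IsCycle ∨ w.first ∉ w.verts.tail.dropLast)
    (η : V) (K : List V)
    (hK : (¬ w.IsCycle ∧ K = w.verts) ∨ (w.IsCycle ∧ K = w.verts.tail))
    (hrep : 2 ≤ K.count η)
    (hearliest : ∀ v : V, 2 ≤ K.count v → K.idxOf η ≤ K.idxOf v)
    (P M S : List V)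
    (hsplit : w.verts = P ++ M ++ S)
    (hP : η ∉ P) (hS : η ∉ S)
    (hMh : M.head? = some η) (hMl : M.getLast? = some η) :
    ∃ s w' : QWalk V E,
      s.verts = M ∧ w'.verts = P ++ η :: S ∧
      s.IsCycleOff η ∧ ¬ s.Trivial ∧ ¬ w'.Trivial ∧
      1 ≤ w'.len ∧ w'.len < w.len ∧ 1 ≤ s.len ∧ s.len < w.len ∧
      QWalk.IsNest w' s w := by
  have hM : 2 ≤ M.length :=
    calc 2 ≤ K.count η := hrep
      _ ≤ w.verts.count η := (QWalk.sublist_verts hK).count_le η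
      _ = M.count η := by simp [hsplit, List.count_eq_zero_of_not_mem, hP, hS]
      _ ≤ M.length := List.count_le_length
  have hPS : 0 < (P ++ S).length :=
    List.length_pos_iff.mpr (QWalk.append_ne_nil_of_split hshape hK hrep hsplit hMh hMl)
  have hchain : (P ++ M ++ S).IsChain E := hsplit ▸ w.chain
  let s : QWalk V E :=
    ⟨M, List.ne_nil_of_mem (List.mem_of_getLast? hMl), hchain.infix ⟨P, S, rfl⟩⟩
  let w' : QWalk V E := ⟨P ++ η :: S, by simp, hchain.contract hMh hMl⟩
  have hsfirst : s.first = η := QWalk.first_eq_of_head? hMh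
  have hslast : s.last = η := QWalk.last_eq_of_getLast? hMl
  refine ⟨s, w', rfl, rfl, ⟨hsfirst.trans hslast.symm, hsfirst⟩, ?_, ?_, ?_, ?_, ?_, ?_,
    ⟨η, P, S, hsfirst, hslast, rfl, hS,
      Or.inr (QWalk.canonical_of_split hshape hK hearliest hsplit hP hMl), hsplit⟩⟩
  all_goals
    simp only [QWalk.Trivial, QWalk.len, s, w', hsplit, List.length_append,
      List.length_cons] at hPS ⊢
    omega

/-- The extraction step of the factorization algorithm: let `w` be a
walk which is neither a simple path nor a simple cycle, and which is open or a cycle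
whose base vertex is not internal.  Let `η` be the earliest repeated vertex of `w`
(occurrences counted in the full vertex sequence if `w` is open, and in its tail if
`w` is a cycle), let `M` be the portion of `w` joining the first occurrence of `η` to
the last occurrence of `η`, and let `w'` be obtained from `w` by replacing `M` with the
single vertex `η`.  Then `M` carries a nontrivial cycle `s` off `η`, `w'` is a
nontrivial walk, `1 ≤ ℓ(w') < ℓ(w)`, `1 ≤ ℓ(s) < ℓ(w)`, the couple `(w', s)` is
canonical, and `w = w' ⊙ s`. -/
theorem stmt5 {V : Type} [Fintype V] [DecidableEq V] (E : V → V → Prop)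
    (w : QWalk V E)
    (hnsp : ¬ w.IsSimplePath) (hnsc : ¬ w.IsSimpleCycle)
    (hshape : ¬ w.IsCycle ∨ w.first ∉ w.verts.tail.dropLast)
    (η : V) (K : List V)
    (hK : (¬ w.IsCycle ∧ K = w.verts) ∨ (w.IsCycle ∧ K = w.verts.tail))
    (hrep : 2 ≤ K.count η)
    (hearliest : ∀ v : V, 2 ≤ K.count v → K.idxOf η ≤ K.idxOf v)
    (P M S : List V)
    (hsplit : w.verts = P ++ M ++ S)
    (hP : η ∉ P) (hS : η ∉ S)
    (hMh : M.head? = some η) (hMl : M.getLast? = some η) :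
    ∃ s w' : QWalk V E,
      s.verts = M ∧ w'.verts = P ++ η :: S ∧
      s.IsCycleOff η ∧ ¬ s.Trivial ∧ ¬ w'.Trivial ∧
      1 ≤ w'.len ∧ w'.len < w.len ∧ 1 ≤ s.len ∧ s.len < w.len ∧
      QWalk.IsNest w' s w :=
  stmt5_general E w hshape η K hK hrep hearliest P M S hsplit hP hS hMh hMl
end

section
/- Path-sum formula for closed walks: let G be a finite quiver with vertex set V and let α ∈ V. Then, in the ring ℚ[[z]] of formal power series, the generating function Σ_{n≥0} c_n z^n, where c_n is the number of walks of length n from α to α on G, equals the dressed-vertex series F_V(α). -/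
/-- The number of walks of length `n` from `α` to `ω` on the quiver with edge
relation `E`: walks are recorded by their vertex sequences, lists of `n + 1`
vertices starting at `α`, ending at `ω`, with consecutive vertices joined by edges. -/
noncomputable def nWalks {V : Type} (E : V → V → Prop) (n : ℕ) (α ω : V) : ℕ :=
  Nat.card {L : List V // L.length = n + 1 ∧ L.head? = some α ∧
    L.getLast? = some ω ∧ L.Chain' E}

/-- Given a family `F` of dressed-vertex series, `dressProd F T [σ₀, …, σₖ]` is the
product `F T σ₀ · F (T ∖ {σ₀}) σ₁ ⋯ F (T ∖ {σ₀, …, σ_{k-1}}) σₖ`. -/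
noncomputable def dressProd {V : Type} [DecidableEq V]
    (F : Finset V → V → PowerSeries ℚ) : Finset V → List V → PowerSeries ℚ
  | _, [] => 1
  | T, v :: r => F T v * dressProd F (T.erase v) r

/-- Fuel-graded version of the dressed-vertex series `F_S(α)`:
`F_S(α) = (1 − Σ_γ z^m · F_{S∖{α}}(μ₂) ⋯ F_{S∖{α,μ₂,…,μ_{m-1}}}(μ_m))⁻¹`,
the sum running over all nontrivial simple cycles `γ = (α μ₂ ⋯ μ_m α)` of the
induced subquiver `G[S]`, recorded by their lists `[μ₂, …, μ_m]` of internal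
vertices (of length `m − 1`). -/
noncomputable def dressFAux {V : Type} [DecidableEq V] (E : V → V → Prop) :
    ℕ → Finset V → V → PowerSeries ℚ
  | 0, _, _ => 1
  | n + 1, S, α =>
      (1 - ∑ᶠ c ∈ {c : List V | c.Nodup ∧ α ∉ c ∧ (∀ v ∈ c, v ∈ S) ∧
            List.Chain E α (c ++ [α])},
          (PowerSeries.X : PowerSeries ℚ) ^ (c.length + 1) *
            dressProd (dressFAux E n) (S.erase α) c)⁻¹

/-- The dressed-vertex series `F_S(α)` of the vertex `α` on the induced subquiver
`G[S]`.  (The fuel `S.card` is enough for the recursion to unfold completely.) -/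
noncomputable def dressF {V : Type} [DecidableEq V] (E : V → V → Prop)
    (S : Finset V) (α : V) : PowerSeries ℚ :=
  dressFAux E S.card S α


/-!
Let `K_T(a, b)` be the generating function of walks of positive length from `a` to `b` whose
intermediate vertices lie in `T`. Cutting such a walk at its last intermediate visit to `v ∈ T`
gives `K_T(a, b) = K_{T∖v}(a, b) + K_T(a, v) · K_{T∖v}(v, b)`. For `a = b = v` this says
`1 + K_T(v, v) = (1 - K_{T∖v}(v, v))⁻¹`; combined with the first step of a walk it shows that
`K_T(a, b)` satisfies the recursion of the sum over simple paths `a μ₂ ⋯ μ_m b` through `T`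
dressed by `1 + K`. By strong induction on `T` the two agree, so `F_S(α) = 1 + K_S(α, α)`, which
for `S = V` is the generating function of closed walks. The decomposition of walks is not done
on lists: both sides are shown to solve the same system `f = c + X · ∑ f`, whose solution is
unique.
-/

open PowerSeries Finset

theorem PowerSeries.eq_of_eq_add_X_mul_sum {ι R : Type*} [Semiring R] (s : ι → Finset ι)
    (c f g : ι → R⟦X⟧) (hf : ∀ i, f i = c i + X * ∑ j ∈ s i, f j)
    (hg : ∀ i, g i = c i + X * ∑ j ∈ s i, g j) : f = g := by
  suffices h : ∀ n i, coeff n (f i) = coeff n (g i) from funext fun i => ext fun n => h n i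
  intro n
  induction n with
  | zero => intro i; rw [hf, hg, map_add, map_add, coeff_zero_X_mul, coeff_zero_X_mul]
  | succ n ih =>
    intro i
    rw [hf, hg, map_add, map_add, coeff_succ_X_mul, coeff_succ_X_mul, map_sum, map_sum]
    simp only [ih]

theorem Finset.sum_filter_eq_sum_erase_add {ι M : Type*} [DecidableEq ι] [AddCommMonoid M]
    {s : Finset ι} {i : ι} (hi : i ∈ s) (p : ι → Prop) [DecidablePred p] (f : ι → M) :
    ∑ j ∈ s with p j, f j = ∑ j ∈ s.erase i with p j, f j + if p i then f i else 0 := by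
  rw [sum_filter, sum_filter, sum_erase_add _ _ hi]

theorem finsum_mem_list_eq_indicator_add_sum_cons {α M : Type*} [Fintype α] [AddCommMonoid M]
    {s : Set (List α)} (hs : s.Finite) (f : List α → M) :
    ∑ᶠ l ∈ s, f l = s.indicator f [] + ∑ a, ∑ᶠ l ∈ {l | a :: l ∈ s}, f (a :: l) := by
  have hsplit : s = (s ∩ {[]}) ∪ ⋃ a, List.cons a '' {l | a :: l ∈ s} := by
    ext (_ | ⟨a, l⟩) <;> simp
  have hcons (a : α) : ({l | a :: l ∈ s} : Set (List α)).Finite :=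
    hs.preimage List.cons_injective.injOn
  have hnil : ∑ᶠ l ∈ s ∩ {[]}, f l = s.indicator f [] := by
    by_cases h : [] ∈ s
    · rw [Set.inter_eq_right.2 (Set.singleton_subset_iff.2 h), finsum_mem_singleton,
        Set.indicator_of_mem h]
    · rw [Set.inter_singleton_eq_empty.2 h, finsum_mem_empty, Set.indicator_of_notMem h]
  conv_lhs => rw [hsplit]
  rw [finsum_mem_union _ (hs.inter_of_left _) (Set.finite_iUnion fun a => (hcons a).image _),
    finsum_mem_iUnion _ fun a => (hcons a).image _, hnil]
  · simp only [finsum_mem_image List.cons_injective.injOn, finsum_eq_sum_of_fintype]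
  · intro a b hab
    simp only [Function.onFun, Set.disjoint_left, Set.mem_image]
    rintro _ ⟨l, -, rfl⟩ ⟨l', -, h⟩
    exact hab (List.cons_eq_cons.1 h).1.symm
  · simp only [Set.disjoint_left, Set.mem_inter_iff, Set.mem_singleton_iff, Set.mem_iUnion,
      Set.mem_image]
    rintro _ ⟨-, rfl⟩ ⟨a, l, -, h⟩
    exact List.cons_ne_nil a l h

section Walks

variable {V : Type} (E : V → V → Prop)

def IsWalk (n : ℕ) (a b : V) (L : List V) : Prop :=
  L.length = n + 1 ∧ L.head? = some a ∧ L.getLast? = some b ∧ L.IsChain E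

variable {E}

lemma isWalk_zero_iff {a b : V} {L : List V} : IsWalk E 0 a b L ↔ L = [a] ∧ a = b := by
  constructor
  · rintro ⟨hlen, hhead, hlast, -⟩
    obtain ⟨x, rfl⟩ := List.length_eq_one_iff.1 hlen
    simp_all
  · rintro ⟨rfl, rfl⟩
    simp [IsWalk]

lemma isWalk_succ_iff {n : ℕ} {a b : V} {L : List V} :
    IsWalk E (n + 1) a b L ↔ ∃ u M, L = a :: M ∧ E a u ∧ IsWalk E n u b M := by
  constructor
  · rintro ⟨hlen, hhead, hlast, hchain⟩
    rcases L with _ | ⟨x, _ | ⟨u, M⟩⟩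
    · simp at hlen
    · simp at hlen
    · simp only [List.head?_cons, Option.some.injEq] at hhead
      subst hhead
      rw [List.isChain_cons_cons] at hchain
      exact ⟨u, u :: M, rfl, hchain.1, by simpa using hlen, rfl,
        by rwa [List.getLast?_cons_cons] at hlast, hchain.2⟩
  · rintro ⟨u, M, rfl, hau, hlen, hhead, hlast, hchain⟩
    obtain ⟨M, rfl⟩ := List.head?_eq_some_iff.1 hhead
    exact ⟨by simpa using hlen, rfl, by rwa [List.getLast?_cons_cons],
      List.isChain_cons_cons.2 ⟨hau, hchain⟩⟩

lemma nWalks_eq_card (n : ℕ) (a b : V) :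
    nWalks E n a b = Nat.card {L // IsWalk E n a b L} := rfl

instance [Finite V] (n : ℕ) (a b : V) : Finite {L // IsWalk E n a b L} :=
  ((List.finite_length_eq V (n + 1)).subset fun _ hL => hL.1).to_subtype

lemma nWalks_zero [DecidableEq V] (a b : V) : nWalks E 0 a b = if a = b then 1 else 0 := by
  rw [nWalks_eq_card]
  split_ifs with hab
  · subst hab
    rw [Nat.card_eq_one_iff_unique]
    refine ⟨⟨fun L M => Subtype.ext ?_⟩, ⟨⟨[a], isWalk_zero_iff.2 ⟨rfl, rfl⟩⟩⟩⟩
    rw [(isWalk_zero_iff.1 L.2).1, (isWalk_zero_iff.1 M.2).1]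
  · rw [Nat.card_eq_zero]
    exact Or.inl ⟨fun L => hab (isWalk_zero_iff.1 L.2).2⟩

lemma nWalks_succ [Fintype V] [DecidableRel E] (n : ℕ) (a b : V) :
    nWalks E (n + 1) a b = ∑ u with E a u, nWalks E n u b := by
  let cons : (Σ u : {u // E a u}, {M // IsWalk E n u b M}) → {L // IsWalk E (n + 1) a b L} :=
    fun p => ⟨a :: p.2, isWalk_succ_iff.2 ⟨p.1, p.2, rfl, p.1.2, p.2.2⟩⟩
  have hcons : Function.Bijective cons := by
    constructor
    · rintro ⟨⟨u, hu⟩, M, hM⟩ ⟨⟨u', hu'⟩, M', hM'⟩ h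
      obtain rfl : M = M' := List.cons_injective (congrArg Subtype.val h)
      obtain rfl : u = u' := Option.some_injective _ (hM.2.1.symm.trans hM'.2.1)
      rfl
    · rintro ⟨L, hL⟩
      obtain ⟨u, M, rfl, hu, hM⟩ := isWalk_succ_iff.1 hL
      exact ⟨⟨⟨u, hu⟩, M, hM⟩, rfl⟩
  rw [nWalks_eq_card, ← Nat.card_congr (Equiv.ofBijective cons hcons), Nat.card_sigma]
  exact (Finset.sum_subtype _ (by simp) fun u => nWalks E n u b).symm

end Walks

section InteriorWalks

variable {V : Type} (E : V → V → Prop) [DecidableRel E]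

/-- The number of walks of length `n` from `a` to `b` whose intermediate vertices lie in `T`
(the endpoints need not); walks of length `0` are not counted. -/
def interiorWalkCount (T : Finset V) : ℕ → V → V → ℕ
  | 0, _, _ => 0
  | n + 1, a, b =>
    (if n = 0 ∧ E a b then 1 else 0) + ∑ u ∈ T with E a u, interiorWalkCount T n u b

noncomputable def interiorWalkSeries (T : Finset V) (a b : V) : ℚ⟦X⟧ :=
  mk fun n => (interiorWalkCount E T n a b : ℚ)

variable {E}

lemma interiorWalkSeries_eq (T : Finset V) (a b : V) :
    interiorWalkSeries E T a b =
      (if E a b then X else 0) + X * ∑ u ∈ T with E a u, interiorWalkSeries E T u b := by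
  ext (_ | n)
  · split_ifs <;> simp [interiorWalkSeries, interiorWalkCount]
  · split_ifs <;> simp_all [interiorWalkSeries, interiorWalkCount, coeff_succ_X_mul, coeff_X]

lemma constantCoeff_interiorWalkSeries (T : Finset V) (a b : V) :
    constantCoeff (interiorWalkSeries E T a b) = 0 := by
  simp [interiorWalkSeries, interiorWalkCount]

variable [DecidableEq V]

/-- Cut a walk at its last intermediate visit to `v`. -/
lemma interiorWalkSeries_eq_add_mul {T : Finset V} {v : V} (hv : v ∈ T) (a b : V) :
    interiorWalkSeries E T a b = interiorWalkSeries E (T.erase v) a b +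
      interiorWalkSeries E T a v * interiorWalkSeries E (T.erase v) v b := by
  refine congrFun (eq_of_eq_add_X_mul_sum (fun a => T.filter (E a ·))
    (fun a => if E a b then X else 0) (fun a => interiorWalkSeries E T a b)
    (fun a => interiorWalkSeries E (T.erase v) a b +
      interiorWalkSeries E T a v * interiorWalkSeries E (T.erase v) v b)
    (fun a => interiorWalkSeries_eq T a b) fun a => ?_) a
  rw [interiorWalkSeries_eq (T.erase v) a b, interiorWalkSeries_eq T a v, sum_add_distrib,
    ← sum_mul, sum_filter_eq_sum_erase_add hv (E a) fun u => interiorWalkSeries E (T.erase v) u b]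
  split_ifs <;> ring

lemma interiorWalkSeries_eq_dressed_first_step (T : Finset V) (a b : V) :
    interiorWalkSeries E T a b = (if E a b then X else 0) +
      X * ∑ v ∈ T with E a v,
        (1 + interiorWalkSeries E T v v) * interiorWalkSeries E (T.erase v) v b := by
  rw [interiorWalkSeries_eq]
  congr 2
  refine sum_congr rfl fun v hv => ?_
  rw [interiorWalkSeries_eq_add_mul (mem_filter.1 hv).1 v b]
  ring

lemma one_add_interiorWalkSeries_self_eq_inv {T : Finset V} {v : V} (hv : v ∈ T) :
    1 + interiorWalkSeries E T v v = (1 - interiorWalkSeries E (T.erase v) v v)⁻¹ := by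
  rw [eq_inv_iff_mul_eq_one (by simp [constantCoeff_interiorWalkSeries])]
  linear_combination interiorWalkSeries_eq_add_mul (E := E) hv v v

lemma mk_nWalks_eq_ite_add_interiorWalkSeries [Fintype V] (a b : V) :
    mk (fun n => (nWalks E n a b : ℚ)) =
      (if a = b then 1 else 0) + interiorWalkSeries E univ a b := by
  refine congrFun (eq_of_eq_add_X_mul_sum (fun a => univ.filter (E a ·))
    (fun a => if a = b then 1 else 0) (fun a => mk fun n => (nWalks E n a b : ℚ))
    (fun a => (if a = b then 1 else 0) + interiorWalkSeries E univ a b)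
    (fun a => ?_) fun a => ?_) a
  · ext (_ | n) <;> split_ifs <;> simp [nWalks_zero, nWalks_succ, coeff_succ_X_mul, *]
  · rw [interiorWalkSeries_eq, sum_add_distrib, sum_ite_eq']
    simp only [mem_filter, mem_univ, true_and]
    split_ifs <;> ring

end InteriorWalks

section PathSums

variable {V : Type} (E : V → V → Prop)

def pathSet (T : Finset V) (a b : V) : Set (List V) :=
  {c | c.Nodup ∧ (∀ v ∈ c, v ∈ T) ∧ (a :: (c ++ [b])).IsChain E}

variable {E}

lemma nil_mem_pathSet {T : Finset V} {a b : V} : [] ∈ pathSet E T a b ↔ E a b := by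
  simp [pathSet]

lemma pathSet_finite [Fintype V] (T : Finset V) (a b : V) : (pathSet E T a b).Finite :=
  (List.finite_length_le V (Fintype.card V)).subset fun _ hc => hc.1.length_le_card

variable [DecidableEq V]

lemma cons_mem_pathSet {T : Finset V} {a b v : V} {c : List V} :
    v :: c ∈ pathSet E T a b ↔ v ∈ T ∧ E a v ∧ c ∈ pathSet E (T.erase v) v b := by
  simp only [pathSet, Set.mem_ofPred_eq, List.nodup_cons, List.mem_cons, forall_eq_or_imp,
    List.cons_append, List.isChain_cons_cons, mem_erase]
  grind

variable (E)

/-- `pathSum E (dressFAux E n) (S.erase α) α α` is the cycle sum in the definition of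
`dressFAux E (n + 1) S α`. -/
noncomputable def pathSum (F : Finset V → V → ℚ⟦X⟧) (T : Finset V) (a b : V) : ℚ⟦X⟧ :=
  ∑ᶠ c ∈ pathSet E T a b, X ^ (c.length + 1) * dressProd F T c

variable {E}

lemma pathSum_eq [Fintype V] [DecidableRel E] (F : Finset V → V → ℚ⟦X⟧) (T : Finset V)
    (a b : V) :
    pathSum E F T a b = (if E a b then X else 0) +
      X * ∑ v ∈ T with E a v, F T v * pathSum E F (T.erase v) v b := by
  have hcons (v : V) : ∑ᶠ c ∈ {c | v :: c ∈ pathSet E T a b},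
      X ^ ((v :: c).length + 1) * dressProd F T (v :: c) =
        if v ∈ T ∧ E a v then X * (F T v * pathSum E F (T.erase v) v b) else 0 := by
    have hset : {c | v :: c ∈ pathSet E T a b} =
        if v ∈ T ∧ E a v then pathSet E (T.erase v) v b else ∅ := by
      ext c
      split_ifs with h
      · simp [cons_mem_pathSet, h]
      · simpa [cons_mem_pathSet] using fun hv hav _ => h ⟨hv, hav⟩
    rw [hset]
    split_ifs with h
    · rw [pathSum, mul_finsum_mem' _ _ (pathSet_finite _ _ _),
        mul_finsum_mem' _ _ (pathSet_finite _ _ _)]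
      refine finsum_mem_congr rfl fun c _ => ?_
      simp only [dressProd, List.length_cons, pow_succ]
      ring
    · exact finsum_mem_empty
  rw [pathSum, finsum_mem_list_eq_indicator_add_sum_cons (pathSet_finite T a b)]
  congr 1
  · by_cases h : E a b <;> simp [Set.indicator, nil_mem_pathSet, h, dressProd]
  · rw [mul_sum, Fintype.sum_congr _ _ hcons, ← sum_filter]
    congr 1
    ext v
    simp

lemma pathSum_one_add_interiorWalkSeries [Fintype V] [DecidableRel E] (T : Finset V) (a b : V) :
    pathSum E (fun T v => 1 + interiorWalkSeries E T v v) T a b = interiorWalkSeries E T a b := by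
  induction T using Finset.strongInduction generalizing a with
  | H T ih =>
    rw [pathSum_eq, interiorWalkSeries_eq_dressed_first_step]
    congr 2
    exact sum_congr rfl fun v hv => by rw [ih _ (erase_ssubset (mem_filter.1 hv).1)]

lemma dressProd_congr {F F' : Finset V → V → ℚ⟦X⟧} {T : Finset V} {c : List V} (hc : c.Nodup)
    (hcT : ∀ v ∈ c, v ∈ T) (h : ∀ T' ⊆ T, ∀ v ∈ T', F T' v = F' T' v) :
    dressProd F T c = dressProd F' T c := by
  induction c generalizing T with
  | nil => rfl
  | cons v c ih =>
    rw [List.nodup_cons] at hc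
    simp only [dressProd]
    rw [h T subset_rfl v (hcT v List.mem_cons_self), ih hc.2
      (fun u hu => mem_erase.2 ⟨ne_of_mem_of_not_mem hu hc.1, hcT u (List.mem_cons_of_mem v hu)⟩)
      (fun T' hT' => h T' (hT'.trans (erase_subset v T)))]

lemma dressFAux_eq_one_add_interiorWalkSeries [Fintype V] [DecidableRel E] (n : ℕ) {S : Finset V}
    {α : V} (hα : α ∈ S) (hS : S.card ≤ n) :
    dressFAux E n S α = 1 + interiorWalkSeries E S α α := by
  induction n generalizing S α with
  | zero => exact absurd (card_pos.2 ⟨α, hα⟩) (by omega)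
  | succ n ih =>
    rw [dressFAux, one_add_interiorWalkSeries_self_eq_inv hα,
      ← pathSum_one_add_interiorWalkSeries]
    refine congrArg (fun s => (1 - s)⁻¹)
      (finsum_mem_congr (Set.ext fun c => ?_) fun c hc => ?_)
    · simp only [pathSet, Set.mem_ofPred_eq, mem_erase]
      exact ⟨fun ⟨hnd, hαc, hcS, hch⟩ =>
          ⟨hnd, fun v hv => ⟨ne_of_mem_of_not_mem hv hαc, hcS v hv⟩, hch⟩,
        fun ⟨hnd, hcS, hch⟩ => ⟨hnd, fun h => (hcS α h).1 rfl, fun v hv => (hcS v hv).2, hch⟩⟩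
    · refine congrArg _ (dressProd_congr hc.1 hc.2.1 fun T' hT' v hv => ih hv ?_)
      have := card_le_card hT'
      rw [card_erase_of_mem hα] at this
      omega

end PathSums

/-- Path-sum formula for closed walks: the generating function of
the numbers of closed walks from `α` to `α` on a finite quiver equals the
dressed-vertex series `F_V(α)`. -/
theorem stmt10 {V : Type} [Fintype V] [DecidableEq V] (E : V → V → Prop) (α : V) :
    PowerSeries.mk (fun n => (nWalks E n α α : ℚ)) = dressF E Finset.univ α := by
  classical
  rw [mk_nWalks_eq_ite_add_interiorWalkSeries, if_pos rfl, dressF,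
    dressFAux_eq_one_add_interiorWalkSeries _ (mem_univ α) le_rfl]
end
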